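/- Let R be a commutative noetherian local ring with maximal ideal m and residue field k, and let M be a cohomologically bounded complex. Then depth of the derived m-completion of M equals depth of M; that is, RHom_R(k, M) ≃ RHom_R(k, LΛ_m(M)), so inf RHom_R(k, M) = inf RHom_R(k, LΛ_m(M)). -/

import Mathlib

/-!
Common infrastructure: we work with cochain complexes of `R`-modules and their
derived category. `inf`/`sup`/amplitude of a complex refer to the degrees of
nonvanishing cohomology; hyper-Ext groups are Hom-groups in the derived category;
depth is `inf RHom(R/I, -)`; derived completeness is the Stacks-project
characterization `RHom(R_f, M) = 0` for all `f ∈ I`; Koszul complexes are realized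
as iterated mapping cones `K(r; M) = cone(M --r--> M)`; derived torsion (local
cohomology) of complexes is computed by the extended Čech complex on a generating
set (valid in the noetherian setting of the statements), realized (up to a shift
by the number of generators, which we account for) as a tensor product of the
cones of `R → R_f`.
-/

open CategoryTheory Limits HomologicalComplex Opposite

universe u

noncomputable section

namespace Paper

variable (R : Type u) [CommRing R]

/-- Cochain complexes of `R`-modules (cohomological grading). -/
abbrev Cplx := CochainComplex (ModuleCat.{u} R) ℤ

instance : (MonoidalCategory.curriedTensor (ModuleCat.{u} R)).Additive where
  map_add := by intros; ext; simp [MonoidalCategory.curriedTensor]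

instance (X : ModuleCat.{u} R) :
    ((MonoidalCategory.curriedTensor (ModuleCat.{u} R)).obj X).Additive where
  map_add := by intros; simp [MonoidalCategory.curriedTensor]

instance : HasDerivedCategory (ModuleCat.{u} R) := HasDerivedCategory.standard _

variable {R}

/-- A module viewed as a complex concentrated in cohomological degree `0`. -/
def sgl (M : ModuleCat.{u} R) : Cplx R :=
  (HomologicalComplex.single (ModuleCat.{u} R) (ComplexShape.up ℤ) 0).obj M

/-- The set of cohomological degrees where a complex has nonvanishing cohomology. -/
def cohSupp {C : Type*} [Category C] [Abelian C] {ι : Type*} {c : ComplexShape ι}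
    (K : HomologicalComplex C c) : Set ι :=
  {i | ¬ IsZero (K.homology i)}

/-- `inf` of a complex: the smallest degree with nonvanishing cohomology. -/
def cInf {C : Type*} [Category C] [Abelian C]
    (K : HomologicalComplex C (ComplexShape.up ℤ)) : ℤ :=
  sInf (cohSupp K)

/-- `sup` of a complex: the largest degree with nonvanishing cohomology. -/
def cSup {C : Type*} [Category C] [Abelian C]
    (K : HomologicalComplex C (ComplexShape.up ℤ)) : ℤ :=
  sSup (cohSupp K)

/-- amplitude `sup - inf`. -/
def camp {C : Type*} [Category C] [Abelian C]
    (K : HomologicalComplex C (ComplexShape.up ℤ)) : ℤ :=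
  cSup K - cInf K

/-- cohomologically bounded -/
def CohBounded {C : Type*} [Category C] [Abelian C]
    (K : HomologicalComplex C (ComplexShape.up ℤ)) : Prop :=
  ∃ a b : ℤ, ∀ i ∈ cohSupp K, a ≤ i ∧ i ≤ b

/-- Nonvanishing of the hyper-Ext group `Ext^i(K, L) = Hom_{D(R)}(K, L[i])`. -/
def extNonzero (K L : Cplx R) (i : ℤ) : Prop :=
  ∃ φ : DerivedCategory.Q.obj K ⟶ (DerivedCategory.Q.obj L)⟦i⟧, φ ≠ 0

/-- The `I`-depth of a complex `M`, i.e. `inf RHom_R(R/I, M)`. -/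
def depth (I : Ideal R) (M : Cplx R) : ℤ :=
  sInf {i | extNonzero (sgl (ModuleCat.of R (R ⧸ I))) M i}

/-- A complex `M` is derived `I`-complete iff `RHom_R(R_f, M) = 0` for every `f ∈ I`
(the Stacks project characterization). -/
def DerivedComplete (I : Ideal R) (M : Cplx R) : Prop :=
  ∀ f ∈ I, ∀ i : ℤ,
    ∀ φ : DerivedCategory.Q.obj (sgl (ModuleCat.of R (Localization.Away f))) ⟶
      (DerivedCategory.Q.obj M)⟦i⟧, φ = 0

/-- A module is derived `I`-complete iff it is so as a complex in degree `0`. -/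
def ModuleDerivedComplete (I : Ideal R) (N : ModuleCat.{u} R) : Prop :=
  DerivedComplete I (sgl N)

/-- The Koszul complex `K(r_1,...,r_n; M)`, realized as an iterated mapping cone of
multiplication maps, so that `K(r; M) = cone(M --r--> M)`. -/
def koszul (rs : List R) (M : Cplx R) : Cplx R :=
  rs.foldr (fun r K => CochainComplex.mappingCone (r • 𝟙 K)) M

/-- acyclicity of a complex -/
def Acyclic (K : Cplx R) : Prop := ∀ i, IsZero (K.homology i)

/-- Two complexes are isomorphic in the derived category. -/
def derIso (K L : Cplx R) : Prop :=
  Nonempty (DerivedCategory.Q.obj K ≅ DerivedCategory.Q.obj L)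

/-- bounded complex of finitely generated free modules -/
def IsBddFree (F : Cplx R) : Prop :=
  (∃ a b : ℤ, ∀ i, (i < a ∨ b < i) → IsZero (F.X i)) ∧
    ∀ i, Module.Free R (F.X i) ∧ Module.Finite R (F.X i)

/-- the residue field of a local ring, as a module over it -/
def resk (R : Type u) [CommRing R] [IsLocalRing R] : ModuleCat.{u} R :=
  ModuleCat.of R (IsLocalRing.ResidueField R)

/-- depth with respect to the maximal ideal: `inf RHom(k, M)` -/
def Depth [IsLocalRing R] (M : Cplx R) : ℤ :=
  sInf {i | extNonzero (sgl (resk R)) M i}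

/-- projective dimension of a bounded complex of finite free modules:
`pd F = sup F - inf (k ⊗^L F)`. -/
def pdF [IsLocalRing R] (F : Cplx R) : ℤ :=
  cSup F - cInf (tensorObj (sgl (resk R)) F)

/-- the map `R → k` as a map of complexes concentrated in degree 0 -/
def unitToRes (R : Type u) [CommRing R] [IsLocalRing R] :
    sgl (ModuleCat.of R R) ⟶ sgl (resk R) :=
  (HomologicalComplex.single (ModuleCat.{u} R) (ComplexShape.up ℤ) 0).map
    (ModuleCat.ofHom (Algebra.linearMap R (IsLocalRing.ResidueField R)))

/-- `P` is a semiprojective (bounded above, degreewise projective) resolution of `M`;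
tensoring with `P` then computes derived tensor products against `M`. -/
structure IsSemiprojRes (M P : Cplx R) (π : P ⟶ M) : Prop where
  qis : QuasiIso π
  proj : ∀ i, Projective (P.X i)
  bddAbove : ∃ b : ℤ, ∀ i, b < i → IsZero (P.X i)

/-- The natural map `H^0(M) → H^0(k ⊗^L M)`, computed on a semiprojective resolution
`P ≃ M` as `H^0(R ⊗ P) → H^0(k ⊗ P)` (note `H^0(R ⊗ P) ≅ H^0(P)`), is nonzero. -/
def MaxDepthMapNonzero (R : Type u) [CommRing R] [IsLocalRing R] (P : Cplx R) : Prop :=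
  homologyMap (tensorHom (unitToRes R) (𝟙 P)) 0 ≠ 0

/-- the extended Čech ("stable Koszul") complex on a list of elements, realized (up to
the shift by the number of elements) as the tensor product of the cones of `R → R_f`;
for noetherian rings, tensoring with it computes derived torsion. -/
def cech (rs : List R) : Cplx R :=
  rs.foldr
    (fun r K => tensorObj
      (CochainComplex.mappingCone
        ((HomologicalComplex.single (ModuleCat.{u} R) (ComplexShape.up ℤ) 0).map
          (ModuleCat.ofHom (Algebra.linearMap R (Localization.Away r))))) K)
    (sgl (ModuleCat.of R R))

/-- `RΓ_I(M)` computed by the Čech complex on generators `rs` of `I`; because of the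
realization of the Čech complex by cones it is shifted: the local cohomology
`H^i_I(M)` is the homology of this complex in degree `i - rs.length`. -/
def derivedTorsion (rs : List R) (M : Cplx R) : Cplx R :=
  tensorObj (cech rs) M

/-- `i`-th local cohomology of a complex, via the Čech complex on generators `rs`. -/
def localCohomologyCx (rs : List R) (M : Cplx R) (i : ℤ) : ModuleCat.{u} R :=
  (derivedTorsion rs M).homology (i - rs.length)

/-- `D` is a dualizing complex: bounded finitely generated cohomology, finite injective
dimension, and the homothety map `R → RHom(D,D)` is an isomorphism (equivalently:
`Hom_{D(R)}(D, D[i])` vanishes for `i ≠ 0` and homothety is bijective onto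
`Hom_{D(R)}(D, D)`). -/
def IsDualizing (D : Cplx R) : Prop :=
  CohBounded D ∧
  (∀ i : ℤ, Module.Finite R (D.homology i)) ∧
  (∃ n : ℤ, ∀ (N : ModuleCat.{u} R) (i : ℤ), n < i →
     ∀ φ : DerivedCategory.Q.obj (sgl N) ⟶ (DerivedCategory.Q.obj D)⟦i⟧, φ = 0) ∧
  Function.Bijective (fun a : R => DerivedCategory.Q.map (a • 𝟙 D)) ∧
  (∀ i : ℤ, i ≠ 0 → ∀ φ : DerivedCategory.Q.obj D ⟶ (DerivedCategory.Q.obj D)⟦i⟧, φ = 0)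

/-- `D` is right-normalized: `inf D = 0`, attained. -/
def IsRightNormalized (D : Cplx R) : Prop :=
  0 ∈ cohSupp D ∧ ∀ i ∈ cohSupp D, 0 ≤ i

/-- `E` is an injective hull of the residue field: an injective module containing the
residue field as an essential submodule. -/
def IsInjectiveHullOfResidueField (R : Type u) [CommRing R] [IsLocalRing R]
    (E : ModuleCat.{u} R) : Prop :=
  Injective E ∧
  ∃ ι : IsLocalRing.ResidueField R →ₗ[R] E, Function.Injective ι ∧
    ∀ S : Submodule R E, S ≠ ⊥ → ∃ y ∈ S, y ≠ 0 ∧ y ∈ LinearMap.range ι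

instance (N : ModuleCat.{u} R) :
    ((linearCoyoneda R (ModuleCat.{u} R)).obj (op N)).Additive where
  map_add := by intros; rfl

/-- `RHom_R(N, K)` for a module `N` and a complex `K`, computed by applying `Hom_R(N,-)`
degreewise (this computes the derived Hom as soon as `K` is a complex of injectives). -/
def homFromModule (N : ModuleCat.{u} R) (K : Cplx R) : Cplx R :=
  ((((linearCoyoneda R (ModuleCat.{u} R)).obj (op N)).mapHomologicalComplex
    (ComplexShape.up ℤ))).obj K

/-- `E` is a semiinjective (bounded below, degreewise injective) resolution of `M`. -/
structure IsSemiinjRes (M E : Cplx R) (ε : M ⟶ E) : Prop where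
  qis : QuasiIso ε
  inj : ∀ i, Injective (E.X i)
  bddBelow : ∃ a : ℤ, ∀ i, i < a → IsZero (E.X i)

instance {R S : Type u} [CommRing R] [CommRing S] (f : R →+* S) :
    (ModuleCat.restrictScalars.{u} f).Additive where
  map_add := rfl

instance {R S : Type u} [CommRing R] [CommRing S] (f : R →+* S) :
    (ModuleCat.extendScalars.{u, u} f).Additive where
  map_add {X Y g h} := by
    letI : Algebra R S := ((algebraMap S S).comp f).toAlgebra
    dsimp only [ModuleCat.extendScalars, ModuleCat.ExtendScalars.map']
    ext1
    exact LinearMap.baseChange_add _ _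

/-- restriction of scalars, for complexes -/
def restrictionFunctor {R S : Type u} [CommRing R] [CommRing S] (f : R →+* S) :
    Cplx S ⥤ Cplx R :=
  (ModuleCat.restrictScalars.{u} f).mapHomologicalComplex (ComplexShape.up ℤ)

/-- base change (extension of scalars) for complexes; along a flat ring map this
computes the derived base change `- ⊗^L_R S`. -/
def baseChangeFunctor {R S : Type u} [CommRing R] [CommRing S] (f : R →+* S) :
    Cplx R ⥤ Cplx S :=
  (ModuleCat.extendScalars.{u, u} f).mapHomologicalComplex (ComplexShape.up ℤ)

/-!
Let `C` be the cone of `f`, so that `K(m; C)` is acyclic. Each generator `r` of `m` acts by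
zero on `k`, so in the triangle `X --r--> X → cone(r)` every map `k → X[i]` factors through
multiplication by `r` and hence vanishes once `RHom(k, cone(r)) = 0`. Peeling off the Koszul
complex one generator at a time gives `RHom(k, C) = 0`, and the long exact `Hom(k, -)`
sequence of `M → N → C` then identifies `RHom(k, M)` with `RHom(k, N)`.
-/

section Pretriangulated

open Pretriangulated

variable {C : Type*} [Category C] [Preadditive C] [HasShift C ℤ]

/-- `RHom(A, Z) = 0`. -/
def ShiftOrthogonal (A Z : C) : Prop :=
  ∀ i : ℤ, ∀ φ : A ⟶ Z⟦i⟧, φ = 0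

lemma shiftOrthogonal_of_isZero (A : C) {Z : C} (hZ : IsZero Z) : ShiftOrthogonal A Z :=
  fun i _ => ((shiftFunctor C i).map_isZero hZ).eq_of_tgt _ _

lemma ShiftOrthogonal.eq_zero_of_shift_shift {A Z : C} (h : ShiftOrthogonal A Z) (i j : ℤ)
    (φ : A ⟶ Z⟦i⟧⟦j⟧) : φ = 0 := by
  have e := (shiftFunctorAdd C i j).app Z
  exact (cancel_mono e.inv).1 (by rw [h _ (φ ≫ e.inv), zero_comp])

variable [HasZeroObject C] [∀ n : ℤ, (shiftFunctor C n).Additive] [Pretriangulated C]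

lemma bijective_comp_mor₁_of_distTriang {T : Triangle C} (hT : T ∈ distTriang C) {A : C}
    (h₃ : ∀ φ : A ⟶ T.obj₃, φ = 0) (h₃' : ∀ φ : A ⟶ T.obj₃⟦(-1 : ℤ)⟧, φ = 0) :
    Function.Bijective (fun φ : A ⟶ T.obj₁ => φ ≫ T.mor₁) := by
  refine ⟨fun φ ψ hφψ => ?_, fun ψ => ?_⟩
  · have hsub : (φ - ψ) ≫ T.mor₁ = 0 := by rw [Preadditive.sub_comp, sub_eq_zero]; exact hφψ
    obtain ⟨a, ha⟩ := Triangle.coyoneda_exact₂ _ (inv_rot_of_distTriang _ hT) (φ - ψ) hsub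
    rw [h₃' a] at ha
    exact sub_eq_zero.1 (ha.trans zero_comp)
  · obtain ⟨a, ha⟩ := Triangle.coyoneda_exact₂ _ hT ψ (h₃ _)
    exact ⟨a, ha.symm⟩

def shiftHomAddEquivOfDistTriang {T : Triangle C} (hT : T ∈ distTriang C) {A : C}
    (h : ShiftOrthogonal A T.obj₃) (i : ℤ) : (A ⟶ T.obj₁⟦i⟧) ≃+ (A ⟶ T.obj₂⟦i⟧) :=
  AddEquiv.ofBijective (Preadditive.rightComp A _)
    (bijective_comp_mor₁_of_distTriang (Triangle.shift_distinguished T hT i) (h i)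
      (h.eq_zero_of_shift_shift i (-1)))

variable {S : Type*} [Ring S] [Linear S C] [∀ n : ℤ, (shiftFunctor C n).Linear S]

lemma ShiftOrthogonal.of_distTriang_of_mor₁_eq_smul {T : Triangle C} (hT : T ∈ distTriang C)
    {A : C} {r : S} (hA : r • 𝟙 A = 0) {e : T.obj₁ ⟶ T.obj₂} (he : T.mor₁ = r • e)
    (h : ShiftOrthogonal A T.obj₃) : ShiftOrthogonal A T.obj₂ := by
  have hA_smul {X : C} (g : A ⟶ X) : r • g = 0 := by
    rw [← Category.id_comp g, ← Linear.smul_comp, hA, zero_comp]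
  intro i φ
  obtain ⟨a, ha⟩ : ∃ a : A ⟶ T.obj₁⟦i⟧, φ = a ≫ (i.negOnePow • T.mor₁⟦i⟧') :=
    Triangle.coyoneda_exact₂ _ (Triangle.shift_distinguished T hT i) φ (h i _)
  rw [ha, he, Functor.map_smul, Linear.comp_units_smul, Linear.comp_smul, hA_smul, smul_zero]

end Pretriangulated

section DerivedCategory

open DerivedCategory

open ZeroObject in
lemma isZero_Q_obj_of_acyclic {K : Cplx R} (h : Acyclic K) : IsZero (Q.obj K) := by
  have hZ : IsZero (0 : Cplx R) := isZero_zero _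
  have : QuasiIso (0 : K ⟶ 0) := ⟨fun i =>
    (quasiIsoAt_iff_exactAt _ i ((exactAt_iff_isZero_homology K i).2 (h i))).2
      ((exactAt_iff_isZero_homology _ i).2 ((homologyFunctor _ _ i).map_isZero hZ))⟩
  exact IsZero.of_iso (Q.map_isZero hZ) (asIso (Q.map (0 : K ⟶ 0)))

lemma smul_id_Q_sgl_eq_zero {M : ModuleCat.{u} R} {r : R} (h : r • 𝟙 M = 0) :
    r • 𝟙 (Q.obj (sgl M)) = 0 := by
  change r • 𝟙 (Q.obj ((CochainComplex.singleFunctor _ 0).obj M)) = 0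
  rw [← Q.map_id, ← Q.map_smul, ← (CochainComplex.singleFunctor _ 0).map_id,
    ← Functor.map_smul, h, Functor.map_zero, Functor.map_zero]

lemma ShiftOrthogonal.of_koszul {A : DerivedCategory (ModuleCat.{u} R)} {rs : List R}
    (hA : ∀ r ∈ rs, r • 𝟙 A = 0) {K : Cplx R} (h : ShiftOrthogonal A (Q.obj (koszul rs K))) :
    ShiftOrthogonal A (Q.obj K) := by
  induction rs with
  | nil => exact h
  | cons r rs ih =>
    refine ih (fun s hs => hA s (.tail _ hs)) ?_
    exact .of_distTriang_of_mor₁_eq_smul (mappingCone_triangle_distinguished (r • 𝟙 _))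
      (hA r List.mem_cons_self) (Q.map_smul r (𝟙 (koszul rs K))) h

end DerivedCategory

lemma smul_id_resk_eq_zero [IsLocalRing R] {r : R}
    (hr : r ∈ IsLocalRing.maximalIdeal R) : r • 𝟙 (resk R) = 0 := by
  ext (x : IsLocalRing.ResidueField R)
  change algebraMap R _ r * x = 0
  rw [IsLocalRing.ResidueField.algebraMap_eq,
    (IsLocalRing.residue_eq_zero_iff r).2 hr, zero_mul]

lemma Depth_eq_of_addEquiv [IsLocalRing R] {M N : Cplx R}
    (e : ∀ i : ℤ, (DerivedCategory.Q.obj (sgl (resk R)) ⟶ (DerivedCategory.Q.obj M)⟦i⟧) ≃+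
      (DerivedCategory.Q.obj (sgl (resk R)) ⟶ (DerivedCategory.Q.obj N)⟦i⟧)) :
    Depth M = Depth N := by
  unfold Depth
  congr 1
  ext i
  simp only [Set.mem_ofPred_eq, extNonzero, ← nontrivial_iff_exists_ne]
  exact (e i).toEquiv.nontrivial_congr

theorem statement5_general (R : Type u) [CommRing R] [IsLocalRing R]
    (M N : Cplx R)
    (f : M ⟶ N) (rs : List R)
    (hspan : Ideal.span {r | r ∈ rs} = IsLocalRing.maximalIdeal R)
    -- `f : M → N` is the derived `m`-adic completion map: `N` is derived complete
    -- and the cone of `f` is killed by the Koszul complex on generators of `m`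
    (hcone : Acyclic (koszul rs (CochainComplex.mappingCone f))) :
    (∀ i : ℤ,
      Nonempty ((DerivedCategory.Q.obj (sgl (resk R)) ⟶ (DerivedCategory.Q.obj M)⟦i⟧) ≃+
        (DerivedCategory.Q.obj (sgl (resk R)) ⟶ (DerivedCategory.Q.obj N)⟦i⟧))) ∧
    Depth M = Depth N := by
  let k := DerivedCategory.Q.obj (sgl (resk R))
  have hk : ∀ r ∈ rs, r • 𝟙 k = 0 := fun r hr =>
    smul_id_Q_sgl_eq_zero (smul_id_resk_eq_zero (hspan ▸ Ideal.subset_span hr))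
  have hcone' : ShiftOrthogonal k (DerivedCategory.Q.obj (CochainComplex.mappingCone f)) :=
    .of_koszul hk (shiftOrthogonal_of_isZero k (isZero_Q_obj_of_acyclic hcone))
  let e :=
    shiftHomAddEquivOfDistTriang (DerivedCategory.mappingCone_triangle_distinguished f) hcone'
  exact ⟨fun i => ⟨e i⟩, Depth_eq_of_addEquiv e⟩

/-- Over a noetherian local ring, if `N = LΛ_m(M)` is the derived
`m`-adic completion of a cohomologically bounded complex `M` (characterized by: `N`
is derived `m`-complete and the completion map `f : M → N` has cone annihilated by
the Koszul complex on generators of `m`), then `RHom(k, M) ≃ RHom(k, N)`; in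
particular every group `Ext^i(k,M) ≅ Ext^i(k,N)` and `depth M = depth N`. -/
theorem statement5 (R : Type u) [CommRing R] [IsNoetherianRing R] [IsLocalRing R]
    (M N : Cplx R) (hM : CohBounded M)
    (f : M ⟶ N) (rs : List R)
    (hspan : Ideal.span {r | r ∈ rs} = IsLocalRing.maximalIdeal R)
    (hN : DerivedComplete (IsLocalRing.maximalIdeal R) N)
    -- `f : M → N` is the derived `m`-adic completion map: `N` is derived complete
    -- and the cone of `f` is killed by the Koszul complex on generators of `m`
    (hcone : Acyclic (koszul rs (CochainComplex.mappingCone f))) :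
    (∀ i : ℤ,
      Nonempty ((DerivedCategory.Q.obj (sgl (resk R)) ⟶ (DerivedCategory.Q.obj M)⟦i⟧) ≃+
        (DerivedCategory.Q.obj (sgl (resk R)) ⟶ (DerivedCategory.Q.obj N)⟦i⟧))) ∧
    Depth M = Depth N :=
  statement5_general R M N f rs hspan hcone

end Paper

end
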